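/- Let H₀ ∈ (0, ∞) be the unique zero of the derivative of A(H) = 8π·(1/(4H²+1) + (4H²/(4H²+1)^{3/2})·artanh(1/√(4H²+1))) on (0, ∞). Then 0.17 < H₀ < 0.19 (so H₀ ≈ 0.18). -/

import Mathlib

/-!
With `s = √(4H² + 1)` one has `A(H) = 8π F(s)` for
`F(s) = 1/s² + (s² - 1)/s³ · artanh(1/s)` (`pedrosaProfile`), and the chain rule gives
`A'(H) = 32πH s⁻⁵ g(s)` with `g(s) = (3 - s²) artanh(1/s) - 3s` (`pedrosaSlope`).
Since `artanh(1/s) = log((s + 1)/(s - 1))/2`, the bounds `(s + 1)/(s - 1) ≥ 32` for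
`s ≤ 33/31` and `≤ 30` for `s ≥ 31/29`, together with `0.693 < log 2 < 0.694`, give `g > 0`
at `H = 0.17` and `g < 0` at `H = 0.19`. By Darboux's theorem `A'` vanishes in between, and
uniqueness of the zero identifies it with `H₀`.
-/

open Real Set

/-- The inverse hyperbolic tangent. -/
noncomputable def artanh (x : ℝ) : ℝ := (1 / 2) * Real.log ((1 + x) / (1 - x))

/-- Pedrosa's formula for the area of the rotational CMC sphere of mean
curvature `H` in `S² × ℝ`. -/
noncomputable def pedrosaArea (H : ℝ) : ℝ :=
  8 * Real.pi * (1 / (4 * H ^ 2 + 1) +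
    (4 * H ^ 2 / (4 * H ^ 2 + 1) ^ ((3 : ℝ) / 2)) *
      _root_.artanh (1 / Real.sqrt (4 * H ^ 2 + 1)))

lemma hasDerivAt_artanh {x : ℝ} (hx : x ∈ Ioo (-1 : ℝ) 1) :
    HasDerivAt _root_.artanh (1 - x ^ 2)⁻¹ x := by
  obtain ⟨hx₁, hx₂⟩ := hx
  have hsub : 1 - x ≠ 0 := by linarith
  have hadd : 1 + x ≠ 0 := by linarith
  have hsq : 1 - x ^ 2 ≠ 0 := by nlinarith
  have h := ((((hasDerivAt_id' x).const_add 1).fun_div ((hasDerivAt_id' x).const_sub 1)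
    hsub).log (div_ne_zero hadd hsub)).const_mul (1 / 2)
  refine h.congr_deriv ?_
  field_simp
  ring

lemma artanh_one_div {s : ℝ} (hs : 1 < s) :
    _root_.artanh (1 / s) = log ((s + 1) / (s - 1)) / 2 := by
  have hs₀ : s ≠ 0 := by positivity
  have hs₁ : s - 1 ≠ 0 := by linarith
  rw [_root_.artanh, show (1 + 1 / s) / (1 - 1 / s) = (s + 1) / (s - 1) by field_simp]
  ring

noncomputable def pedrosaProfile (s : ℝ) : ℝ :=
  1 / s ^ 2 + (s ^ 2 - 1) / s ^ 3 * _root_.artanh (1 / s)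

noncomputable def pedrosaSlope (s : ℝ) : ℝ :=
  (3 - s ^ 2) * _root_.artanh (1 / s) - 3 * s

lemma pedrosaArea_eq_pedrosaProfile (H : ℝ) :
    pedrosaArea H = 8 * π * pedrosaProfile √(4 * H ^ 2 + 1) := by
  have hu : 0 ≤ 4 * H ^ 2 + 1 := by positivity
  have hrpow : (4 * H ^ 2 + 1) ^ ((3 : ℝ) / 2) = √(4 * H ^ 2 + 1) ^ 3 := by
    rw [sqrt_eq_rpow, ← rpow_mul_natCast hu]
    norm_num
  rw [pedrosaArea, pedrosaProfile, hrpow, sq_sqrt hu]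
  ring

lemma one_lt_sqrt_four_mul_sq_add_one {H : ℝ} (hH : H ≠ 0) : 1 < √(4 * H ^ 2 + 1) :=
  lt_sqrt_of_sq_lt (by linarith [(by positivity : 0 < H ^ 2)])

lemma hasDerivAt_pedrosaProfile {s : ℝ} (hs : 1 < s) :
    HasDerivAt pedrosaProfile (pedrosaSlope s / s ^ 4) s := by
  have hs₀ : s ≠ 0 := by positivity
  have hsq : s ^ 2 - 1 ≠ 0 := by nlinarith
  have hinv : 1 / s ∈ Ioo (-1 : ℝ) 1 :=
    ⟨by linarith [one_div_pos.2 (zero_lt_one.trans hs)], (div_lt_one (by linarith)).2 hs⟩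
  have h := ((hasDerivAt_const s (1 : ℝ)).fun_div (hasDerivAt_pow 2 s) (by positivity)).add
    ((((hasDerivAt_pow 2 s).sub_const 1).fun_div (hasDerivAt_pow 3 s) (by positivity)).mul
      ((hasDerivAt_artanh hinv).comp s
        ((hasDerivAt_const s (1 : ℝ)).fun_div (hasDerivAt_id' s) hs₀)))
  refine h.congr_deriv ?_
  simp only [pedrosaSlope, Function.comp_apply]
  field_simp
  ring

lemma hasDerivAt_pedrosaArea {H : ℝ} (hH : H ≠ 0) :
    HasDerivAt pedrosaArea
      (32 * π * H / √(4 * H ^ 2 + 1) ^ 5 * pedrosaSlope √(4 * H ^ 2 + 1)) H := by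
  have hs := one_lt_sqrt_four_mul_sq_add_one hH
  have hu : HasDerivAt (fun y => 4 * y ^ 2 + 1) (8 * H) H :=
    (((hasDerivAt_pow 2 H).const_mul 4).add_const 1).congr_deriv (by norm_num; ring)
  have h := ((hasDerivAt_pedrosaProfile hs).comp H (hu.sqrt (by positivity))).const_mul (8 * π)
  rw [show pedrosaArea = fun y => 8 * π * pedrosaProfile √(4 * y ^ 2 + 1) from
    funext pedrosaArea_eq_pedrosaProfile]
  refine h.congr_deriv ?_
  have : √(4 * H ^ 2 + 1) ≠ 0 := by positivity
  field_simp
  ring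

lemma deriv_pedrosaArea_pos {H : ℝ} (hH : 0 < H) (h : 0 < pedrosaSlope √(4 * H ^ 2 + 1)) :
    0 < deriv pedrosaArea H := by
  rw [(hasDerivAt_pedrosaArea hH.ne').deriv]
  exact mul_pos (by positivity) h

lemma deriv_pedrosaArea_neg {H : ℝ} (hH : 0 < H) (h : pedrosaSlope √(4 * H ^ 2 + 1) < 0) :
    deriv pedrosaArea H < 0 := by
  rw [(hasDerivAt_pedrosaArea hH.ne').deriv]
  exact mul_neg_of_pos_of_neg (by positivity) h

lemma pedrosaSlope_pos {s : ℝ} (hs : 1 < s) (hs' : s ≤ 33 / 31) : 0 < pedrosaSlope s := by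
  have hratio : (2 : ℝ) ^ 5 ≤ (s + 1) / (s - 1) := by
    rw [le_div_iff₀ (by linarith)]
    linarith
  have hlog : 5 * log 2 ≤ log ((s + 1) / (s - 1)) := by
    rw [show (5 : ℝ) * log 2 = log (2 ^ 5) by rw [log_pow]; norm_num]
    exact log_le_log (by norm_num) hratio
  have hlog2 := log_two_gt_d9
  have h3 : 0 < 3 - s ^ 2 := by nlinarith
  rw [pedrosaSlope, artanh_one_div hs]
  nlinarith [mul_le_mul_of_nonneg_left hlog h3.le]

lemma pedrosaSlope_neg {s : ℝ} (hs : 31 / 29 ≤ s) : pedrosaSlope s < 0 := by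
  have hs₁ : 1 < s := by linarith
  have hratio : (s + 1) / (s - 1) ≤ 2 ^ 5 * (15 / 16) := by
    rw [div_le_iff₀ (by linarith)]
    linarith
  have hlog : log ((s + 1) / (s - 1)) < 3.42 := by
    have h15 := log_le_sub_one_of_pos (show (0 : ℝ) < 15 / 16 by norm_num)
    have hlog2 := log_two_lt_d9
    calc log ((s + 1) / (s - 1)) ≤ log (2 ^ 5 * (15 / 16)) :=
          log_le_log (div_pos (by linarith) (by linarith)) hratio
      _ = 5 * log 2 + log (15 / 16) := by
          rw [log_mul (by norm_num) (by norm_num), log_pow]; norm_num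
      _ < 3.42 := by linarith
  have hlog_pos : 0 < log ((s + 1) / (s - 1)) :=
    log_pos ((one_lt_div (by linarith)).2 (by linarith))
  rw [pedrosaSlope, artanh_one_div hs₁]
  rcases le_or_gt (s ^ 2) 3 with h3 | h3
  · nlinarith [mul_le_mul_of_nonneg_left hlog.le (sub_nonneg.2 h3)]
  · nlinarith [mul_pos hlog_pos (sub_pos.2 h3)]

theorem pedrosaArea_critical_value_bounds_general (H₀ : ℝ)
    (huniq : ∀ H ∈ Set.Ioi (0 : ℝ), deriv pedrosaArea H = 0 → H = H₀) :
    0.17 < H₀ ∧ H₀ < 0.19 := by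
  have hpos : 0 < deriv pedrosaArea 0.17 :=
    deriv_pedrosaArea_pos (by norm_num) <| pedrosaSlope_pos
      (one_lt_sqrt_four_mul_sq_add_one (by norm_num))
      ((sqrt_le_left (by norm_num)).2 (by norm_num))
  have hneg : deriv pedrosaArea 0.19 < 0 :=
    deriv_pedrosaArea_neg (by norm_num) <|
      pedrosaSlope_neg ((le_sqrt' (by norm_num)).2 (by norm_num))
  obtain ⟨H, hH, hH_crit⟩ : (0 : ℝ) ∈ deriv pedrosaArea '' Ioo 0.17 0.19 :=
    exists_hasDerivWithinAt_eq_of_lt_of_gt (by norm_num)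
      (fun x hx => (hasDerivAt_pedrosaArea (by linarith [hx.1] : x ≠ 0)).differentiableAt
        |>.hasDerivAt.hasDerivWithinAt)
      hpos hneg
  obtain rfl := huniq H (lt_trans (by norm_num) hH.1) hH_crit
  exact hH

/-- If `H₀` is the unique zero of `A'` in `(0, ∞)`, then `0.17 < H₀ < 0.19`. -/
theorem pedrosaArea_critical_value_bounds (H₀ : ℝ) (hH₀ : H₀ ∈ Set.Ioi (0 : ℝ))
    (hzero : deriv pedrosaArea H₀ = 0)
    (huniq : ∀ H ∈ Set.Ioi (0 : ℝ), deriv pedrosaArea H = 0 → H = H₀) :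
    0.17 < H₀ ∧ H₀ < 0.19 :=
  pedrosaArea_critical_value_bounds_general H₀ huniq
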